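/- arXiv:1903.05526 — 7 statements merged into one kernel-verified Lean document; each statement's English description precedes it below -/
import Mathlib

section
/- Suppose t, ν solve d(ν²)/dr = 6t, dt/dr = 1 - 2t²/ν² with t(0) = 0, ν(0) = ν₀ > 0. Then along the solution, t² = (ν^{10/3} - ν₀^{10/3})/(5ν^{4/3}). -/
/-!
With `u = ν²` the system reads `u' = 6t`, `t' = 1 - 2t²/u`, and differentiating shows that
`5 t² u^{2/3} - u^{5/3}` has derivative zero for `r > 0`. By continuity at `r = 0` it keeps its
initial value `-ν₀^{10/3}`, and solving for `t²` gives the formula.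
-/

open Set

/-- For `u = ν²` this is `-(ν⁴ (ν² - 5t²)³)^{1/3}`. -/
noncomputable def spin7Invariant (t u : ℝ) : ℝ :=
  5 * t ^ 2 * u ^ (2 / 3 : ℝ) - u ^ (5 / 3 : ℝ)

lemma continuous_spin7Invariant : Continuous fun p : ℝ × ℝ => spin7Invariant p.1 p.2 := by
  unfold spin7Invariant
  have h23 := Real.continuous_rpow_const (q := 2 / 3) (by norm_num)
  have h53 := Real.continuous_rpow_const (q := 5 / 3) (by norm_num)
  fun_prop

lemma hasDerivAt_spin7Invariant {t u : ℝ → ℝ} {x : ℝ} (hu : 0 < u x)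
    (hu' : HasDerivAt u (6 * t x) x) (ht' : HasDerivAt t (1 - 2 * t x ^ 2 / u x) x) :
    HasDerivAt (fun s => spin7Invariant (t s) (u s)) 0 x := by
  have hu23 := (Real.hasDerivAt_rpow_const (p := 2 / 3) (Or.inl hu.ne')).comp x hu'
  have hu53 := (Real.hasDerivAt_rpow_const (p := 5 / 3) (Or.inl hu.ne')).comp x hu'
  have ht2 := ht'.fun_pow 2
  refine (((ht2.const_mul 5).mul hu23).sub hu53).congr_deriv ?_
  have hlower : u x ^ (2 / 3 - 1 : ℝ) = u x ^ (2 / 3 : ℝ) / u x := by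
    rw [Real.rpow_sub hu, Real.rpow_one]
  have hupper : u x ^ (5 / 3 - 1 : ℝ) = u x ^ (2 / 3 : ℝ) := by norm_num
  simp only [Function.comp_apply, hlower, hupper]
  push_cast
  field_simp
  ring

lemma eq_of_hasDerivAt_zero {f : ℝ → ℝ} {a b : ℝ} (hab : a ≤ b) (hf : ContinuousOn f (Icc a b))
    (hf' : ∀ x ∈ Ioo a b, HasDerivAt f 0 x) : f b = f a := by
  rcases hab.eq_or_lt with rfl | hlt
  · rfl
  obtain ⟨c, -, hc⟩ := exists_hasDerivAt_eq_slope f (fun _ => 0) hlt hf hf'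
  rw [eq_comm, div_eq_zero_iff, sub_eq_zero, sub_eq_zero] at hc
  exact hc.resolve_right hlt.ne'

lemma sq_eq_of_spin7Invariant_eq {t ν ν₀ : ℝ} (hν : 0 < ν) (hν₀ : 0 < ν₀)
    (h : spin7Invariant t (ν ^ 2) = spin7Invariant 0 (ν₀ ^ 2)) :
    t ^ 2 = (ν ^ (10 / 3 : ℝ) - ν₀ ^ (10 / 3 : ℝ)) / (5 * ν ^ (4 / 3 : ℝ)) := by
  have hsq {x : ℝ} (hx : 0 < x) (p : ℝ) : (x ^ 2) ^ p = x ^ (2 * p) := by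
    exact_mod_cast (Real.rpow_natCast_mul hx.le 2 p).symm
  have hpos : 0 < ν ^ (4 / 3 : ℝ) := Real.rpow_pos_of_pos hν _
  simp only [spin7Invariant, hsq hν, hsq hν₀] at h
  norm_num at h
  field_simp
  linarith

theorem spin7_t_in_terms_of_nu (t ν : ℝ → ℝ) (ν₀ : ℝ) (hν₀ : 0 < ν₀)
    (ht0 : t 0 = 0) (hν0 : ν 0 = ν₀)
    (htc : ContinuousOn t (Ici 0)) (hνc : ContinuousOn ν (Ici 0))
    (hpos : ∀ r > 0, 0 < t r ∧ 0 < ν r)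
    (h1 : ∀ r > 0, HasDerivAt (fun s => ν s ^ 2) (6 * t r) r)
    (h2 : ∀ r > 0, HasDerivAt t (1 - 2 * t r ^ 2 / ν r ^ 2) r) :
    ∀ r ≥ 0, t r ^ 2 = (ν r ^ ((10 : ℝ) / 3) - ν₀ ^ ((10 : ℝ) / 3)) / (5 * ν r ^ ((4 : ℝ) / 3)) := by
  intro r hr
  set G : ℝ → ℝ := fun s => spin7Invariant (t s) (ν s ^ 2)
  have hGc : ContinuousOn G (Icc 0 r) :=
    (continuous_spin7Invariant.comp_continuousOn (htc.prodMk (hνc.pow 2))).mono Icc_subset_Ici_self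
  have hG' : ∀ x ∈ Ioo 0 r, HasDerivAt G 0 x := fun x hx =>
    hasDerivAt_spin7Invariant (pow_pos (hpos x hx.1).2 2) (h1 x hx.1) (h2 x hx.1)
  have hνr : 0 < ν r := hr.eq_or_lt.elim (fun h => h ▸ hν0 ▸ hν₀) (fun h => (hpos r h).2)
  have hG : G r = G 0 := eq_of_hasDerivAt_zero hr hGc hG'
  rw [show G 0 = spin7Invariant 0 (ν₀ ^ 2) by simp only [G, ht0, hν0]] at hG
  exact sq_eq_of_spin7Invariant_eq hνr hν₀ hG
end

section
/- Suppose t, ν solve d(ν²)/dr = 6t, dt/dr = 1 - 2t²/ν² with t(0) = 0, ν(0) = ν₀ > 0, and both positive and defined for all r > 0 with ν(r) → ∞ as r → ∞. Then the ratio t(r)²/ν(r)² converges to 1/5 as r → ∞. -/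
/-!
Writing `u = ν²`, the system reads `u' = 6t`, `t' = 1 - 2t²/u`, and it has the first integral
`5 t² u^{2/3} - u^{5/3}`. Dividing by `5 u^{5/3}` gives `t²/u = 1/5 + C / (5 u^{5/3})` for a
constant `C`, and the correction term vanishes as `u → ∞`.
-/

open Set Filter

namespace Spin7

noncomputable def firstIntegral (t u : ℝ) : ℝ :=
  5 * t ^ 2 * u ^ ((2 : ℝ) / 3) - u ^ ((5 : ℝ) / 3)

lemma rpow_five_thirds_eq {u : ℝ} (hu : 0 ≤ u) :
    u ^ ((5 : ℝ) / 3) = u * u ^ ((2 : ℝ) / 3) := by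
  rw [← Real.rpow_one_add' hu (by norm_num)]
  norm_num

lemma sq_div_eq_add_firstIntegral {t u : ℝ} (hu : 0 < u) :
    t ^ 2 / u = 1 / 5 + firstIntegral t u / (5 * u ^ ((5 : ℝ) / 3)) := by
  have hu23 : 0 < u ^ ((2 : ℝ) / 3) := Real.rpow_pos_of_pos hu _
  rw [firstIntegral, rpow_five_thirds_eq hu.le]
  field_simp
  ring

lemma hasDerivAt_firstIntegral {t u : ℝ → ℝ} {r : ℝ} (hu : 0 < u r)
    (hu' : HasDerivAt u (6 * t r) r) (ht' : HasDerivAt t (1 - 2 * t r ^ 2 / u r) r) :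
    HasDerivAt (fun s => firstIntegral (t s) (u s)) 0 r := by
  have hu23 : HasDerivAt (fun s => u s ^ ((2 : ℝ) / 3))
      (6 * t r * ((2 : ℝ) / 3) * u r ^ ((2 : ℝ) / 3 - 1)) r :=
    hu'.rpow_const (Or.inl hu.ne')
  have hu53 : HasDerivAt (fun s => u s ^ ((5 : ℝ) / 3))
      (6 * t r * ((5 : ℝ) / 3) * u r ^ ((5 : ℝ) / 3 - 1)) r :=
    hu'.rpow_const (Or.inl hu.ne')
  have ht2 : HasDerivAt (fun s => t s ^ 2) (2 * t r * (1 - 2 * t r ^ 2 / u r)) r := by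
    simpa [mul_comm] using ht'.fun_pow 2
  have h := ((ht2.const_mul 5).mul hu23).sub hu53
  convert (show HasDerivAt (fun s => firstIntegral (t s) (u s)) _ r from h) using 1
  have hu_pow : u r ^ ((2 : ℝ) / 3) = u r * u r ^ ((2 : ℝ) / 3 - 1) := by
    rw [← Real.rpow_one_add' hu.le (by norm_num)]
    norm_num
  rw [show (5 : ℝ) / 3 - 1 = 2 / 3 by norm_num, hu_pow]
  field_simp
  ring

lemma firstIntegral_eq_of_pos {t u : ℝ → ℝ} (hu : ∀ r > 0, 0 < u r)
    (hu' : ∀ r > 0, HasDerivAt u (6 * t r) r)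
    (ht' : ∀ r > 0, HasDerivAt t (1 - 2 * t r ^ 2 / u r) r) {r s : ℝ} (hr : 0 < r) (hs : 0 < s) :
    firstIntegral (t r) (u r) = firstIntegral (t s) (u s) := by
  have hderiv : ∀ x ∈ Ioi (0 : ℝ), HasDerivAt (fun s => firstIntegral (t s) (u s)) 0 x :=
    fun x hx => hasDerivAt_firstIntegral (hu x hx) (hu' x hx) (ht' x hx)
  exact isOpen_Ioi.is_const_of_deriv_eq_zero isPreconnected_Ioi
    (fun x hx => (hderiv x hx).differentiableAt.differentiableWithinAt)
    (fun x hx => (hderiv x hx).deriv) hr hs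

lemma tendsto_sq_div {t u : ℝ → ℝ} (hu : ∀ r > 0, 0 < u r)
    (hu' : ∀ r > 0, HasDerivAt u (6 * t r) r)
    (ht' : ∀ r > 0, HasDerivAt t (1 - 2 * t r ^ 2 / u r) r) (hinf : Tendsto u atTop atTop) :
    Tendsto (fun r => t r ^ 2 / u r) atTop (nhds (1 / 5)) := by
  set C := firstIntegral (t 1) (u 1)
  have hratio : ∀ r ≥ (1 : ℝ), 1 / 5 + C / (5 * u r ^ ((5 : ℝ) / 3)) = t r ^ 2 / u r := by
    intro r hr
    have hr0 : 0 < r := one_pos.trans_le hr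
    rw [sq_div_eq_add_firstIntegral (hu r hr0), firstIntegral_eq_of_pos hu hu' ht' hr0 one_pos]
  have hcorr : Tendsto (fun r => C / (5 * u r ^ ((5 : ℝ) / 3))) atTop (nhds 0) :=
    tendsto_const_nhds.div_atTop
      (((tendsto_rpow_atTop (by norm_num)).comp hinf).const_mul_atTop (by norm_num))
  simpa using (tendsto_const_nhds.add hcorr).congr'
    ((eventually_ge_atTop 1).mono hratio)

end Spin7

theorem spin7_asymptotic_ratio_general (t ν : ℝ → ℝ)
    (hpos : ∀ r > 0, 0 < t r ∧ 0 < ν r)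
    (h1 : ∀ r > 0, HasDerivAt (fun s => ν s ^ 2) (6 * t r) r)
    (h2 : ∀ r > 0, HasDerivAt t (1 - 2 * t r ^ 2 / ν r ^ 2) r)
    (hinf : Tendsto ν atTop atTop) :
    Tendsto (fun r => t r ^ 2 / ν r ^ 2) atTop (nhds (1 / 5)) :=
  Spin7.tendsto_sq_div (u := fun s => ν s ^ 2) (fun r hr => pow_pos (hpos r hr).2 2) h1 h2
    ((tendsto_pow_atTop two_ne_zero).comp hinf)

theorem spin7_asymptotic_ratio (t ν : ℝ → ℝ) (ν₀ : ℝ) (hν₀ : 0 < ν₀)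
    (ht0 : t 0 = 0) (hν0 : ν 0 = ν₀)
    (hpos : ∀ r > 0, 0 < t r ∧ 0 < ν r)
    (h1 : ∀ r > 0, HasDerivAt (fun s => ν s ^ 2) (6 * t r) r)
    (h2 : ∀ r > 0, HasDerivAt t (1 - 2 * t r ^ 2 / ν r ^ 2) r)
    (hinf : Tendsto ν atTop atTop) :
    Tendsto (fun r => t r ^ 2 / ν r ^ 2) atTop (nhds (1 / 5)) :=
  spin7_asymptotic_ratio_general t ν hpos h1 h2 hinf
end

section
/- Let x solve dx/dr = -(2/t) x (x - (1 - 2t²/ν²)) on its maximal interval of existence, with t > 0 and 0 < 1 - 2t²/ν² < 1. If x(r₀) > 0 for some r₀ > 0, then for any r₁ > r₀ and all r in [r₀, r₁] one has min{x(r₀), inf_{[r₀,r₁]}(1 - 2t²/ν²)} ≤ x(r) ≤ max{x(r₀), sup_{[r₀,r₁]}(1 - 2t²/ν²)}; in particular x is bounded on compact intervals and extends to all of (0,∞). -/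
/-!
The equation `x' = -k x (x - h)` with `k > 0` is a logistic equation with varying carrying
capacity `h`: a positive solution decreases while it lies above `h` and increases while it lies
in `(0, h)`. Hence `x` can never rise above `max (x r₀) (sup h)` nor fall below
`min (x r₀) (inf h)`; the latter bound is positive because the continuous function `h > 0`
attains its infimum on the compact interval.
-/

open Set

theorem image_le_of_deriv_right_neg_of_mem_Ioo {f f' : ℝ → ℝ} {a b U V : ℝ} (hUV : U < V)
    (hf : ContinuousOn f (Icc a b))
    (hf' : ∀ x ∈ Ico a b, HasDerivWithinAt f (f' x) (Ici x) x) (ha : f a ≤ U)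
    (hneg : ∀ x ∈ Ico a b, f x ∈ Ioo U V → f' x < 0) :
    ∀ ⦃x⦄, x ∈ Icc a b → f x ≤ U := by
  intro x hx
  by_contra! hUx
  obtain ⟨B, hUB, hB⟩ := exists_between (lt_min hUx hUV)
  have hfB : f x ≤ B :=
    image_le_of_deriv_right_lt_deriv_boundary (B := fun _ => B) (B' := fun _ => 0) hf hf'
      (ha.trans hUB.le) (fun _ => hasDerivAt_const _ _)
      (fun y hy hyB => hneg y hy ⟨hyB ▸ hUB, hyB ▸ hB.trans_le (min_le_right _ _)⟩) hx
  exact (hfB.trans_lt hB).not_ge (min_le_left _ _)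

theorem le_image_of_deriv_right_pos_of_mem_Ioo {f f' : ℝ → ℝ} {a b c L : ℝ} (hcL : c < L)
    (hf : ContinuousOn f (Icc a b))
    (hf' : ∀ x ∈ Ico a b, HasDerivWithinAt f (f' x) (Ici x) x) (ha : L ≤ f a)
    (hpos : ∀ x ∈ Ico a b, f x ∈ Ioo c L → 0 < f' x) :
    ∀ ⦃x⦄, x ∈ Icc a b → L ≤ f x := by
  intro x hx
  have := image_le_of_deriv_right_neg_of_mem_Ioo (f := -f) (f' := -f') (neg_lt_neg hcL) hf.neg
    (fun y hy => (hf' y hy).neg) (neg_le_neg ha)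
    (fun y hy hy' => neg_neg_of_pos (hpos y hy ⟨neg_lt_neg_iff.1 hy'.2, neg_lt_neg_iff.1 hy'.1⟩))
    hx
  simpa using this

section Logistic

variable {x k h : ℝ → ℝ} {a b : ℝ}

theorem le_max_of_hasDerivAt_logistic {M : ℝ} (hk : ∀ s ∈ Icc a b, 0 < k s)
    (hx : ∀ s ∈ Icc a b, HasDerivAt x (-k s * x s * (x s - h s)) s) (ha : 0 < x a)
    (hhM : ∀ s ∈ Icc a b, h s ≤ M) :
    ∀ s ∈ Icc a b, x s ≤ max (x a) M := by
  refine image_le_of_deriv_right_neg_of_mem_Ioo (lt_add_one _)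
    (fun s hs => (hx s hs).continuousAt.continuousWithinAt)
    (fun s hs => (hx s (Ico_subset_Icc_self hs)).hasDerivWithinAt) (le_max_left _ _) ?_
  intro s hs ⟨hxs, _⟩
  have hs' := Ico_subset_Icc_self hs
  have hxpos : 0 < x s := ha.trans_le ((le_max_left _ _).trans hxs.le)
  have hxh : 0 < x s - h s := by linarith [hhM s hs', le_max_right (x a) M]
  have := mul_pos (mul_pos (hk s hs') hxpos) hxh
  linarith

theorem min_le_of_hasDerivAt_logistic {m : ℝ} (hk : ∀ s ∈ Icc a b, 0 < k s)
    (hx : ∀ s ∈ Icc a b, HasDerivAt x (-k s * x s * (x s - h s)) s) (ha : 0 < x a)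
    (hm : 0 < m) (hmh : ∀ s ∈ Icc a b, m ≤ h s) :
    ∀ s ∈ Icc a b, min (x a) m ≤ x s := by
  refine le_image_of_deriv_right_pos_of_mem_Ioo (lt_min ha hm)
    (fun s hs => (hx s hs).continuousAt.continuousWithinAt)
    (fun s hs => (hx s (Ico_subset_Icc_self hs)).hasDerivWithinAt) (min_le_left _ _) ?_
  intro s hs ⟨hxpos, hxs⟩
  have hs' := Ico_subset_Icc_self hs
  have hxh : 0 < h s - x s := by linarith [hmh s hs', min_le_right (x a) m]
  have := mul_pos (mul_pos (hk s hs') hxpos) hxh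
  linarith

end Logistic

theorem IsCompact.sInf_image_pos {f : ℝ → ℝ} {K : Set ℝ} (hK : IsCompact K) (hne : K.Nonempty)
    (hf : ContinuousOn f K) (hpos : ∀ s ∈ K, 0 < f s) : 0 < sInf (f '' K) := by
  obtain ⟨s, hs, hfs⟩ := (hK.image_of_continuousOn hf).sInf_mem (hne.image f)
  exact hfs ▸ hpos s hs

theorem spin7_instanton_bounds (t ν x : ℝ → ℝ)
    (htc : ContinuousOn t (Ioi 0)) (hνc : ContinuousOn ν (Ioi 0))
    (htpos : ∀ r > 0, 0 < t r)
    (hh : ∀ r > 0, 0 < 1 - 2 * t r ^ 2 / ν r ^ 2 ∧ 1 - 2 * t r ^ 2 / ν r ^ 2 < 1)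
    (hx : ∀ r > 0,
      HasDerivAt x (-(2 / t r) * x r * (x r - (1 - 2 * t r ^ 2 / ν r ^ 2))) r) :
    ∀ r₀ > 0, 0 < x r₀ → ∀ r₁ > r₀, ∀ r ∈ Icc r₀ r₁,
      min (x r₀) (sInf ((fun s => 1 - 2 * t s ^ 2 / ν s ^ 2) '' Icc r₀ r₁)) ≤ x r ∧
      x r ≤ max (x r₀) (sSup ((fun s => 1 - 2 * t s ^ 2 / ν s ^ 2) '' Icc r₀ r₁)) := by
  intro r₀ hr₀ hx₀ r₁ hr₁ r hr
  set h : ℝ → ℝ := fun s => 1 - 2 * t s ^ 2 / ν s ^ 2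
  have hsub : Icc r₀ r₁ ⊆ Ioi 0 := fun s hs => hr₀.trans_le hs.1
  -- `ν s = 0` would give `h s = 1`
  have hν : ∀ s ∈ Icc r₀ r₁, ν s ^ 2 ≠ 0 := fun s hs hzero => by
    simpa [hzero] using (hh s (hsub hs)).2
  have hhc : ContinuousOn h (Icc r₀ r₁) :=
    continuousOn_const.sub <|
      (continuousOn_const.mul ((htc.mono hsub).pow 2)).div ((hνc.mono hsub).pow 2) hν
  have hK := isCompact_Icc.image_of_continuousOn hhc
  have hk : ∀ s ∈ Icc r₀ r₁, 0 < 2 / t s := fun s hs => div_pos two_pos (htpos s (hsub hs))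
  have hxd : ∀ s ∈ Icc r₀ r₁, HasDerivAt x (-(2 / t s) * x s * (x s - h s)) s :=
    fun s hs => hx s (hsub hs)
  exact ⟨min_le_of_hasDerivAt_logistic hk hxd hx₀
      (isCompact_Icc.sInf_image_pos (nonempty_Icc.2 hr₁.le) hhc fun s hs => (hh s (hsub hs)).1)
      (fun s hs => csInf_le hK.bddBelow (mem_image_of_mem h hs)) r hr,
    le_max_of_hasDerivAt_logistic hk hxd hx₀
      (fun s hs => le_csSup hK.bddAbove (mem_image_of_mem h hs)) r hr⟩
end

section
/- Let t be continuous positive on (0,∞) with ∫_ε^∞ dr/t(r) = ∞ for every ε > 0, and let h(r) = 1 - 2t(r)²/ν(r)² satisfy 0 < h < 1 and h(r) → 3/5 as r → ∞. Suppose x : (0,∞) → ℝ solves dx/dr = -(2/t)x(x - h), is positive and increasing, and bounded above by h. Then lim_{r→∞} x(r) = 3/5. -/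
open Set Filter

theorem spin7_instanton_limit_three_fifths (t h x : ℝ → ℝ)
    (htc : ContinuousOn t (Ioi 0)) (htp : ∀ r > 0, 0 < t r)
    (hhint : ∀ ε > (0 : ℝ),
      Tendsto (fun r => ∫ s in ε..r, (t s)⁻¹) atTop atTop)
    (hh : ∀ r > 0, 0 < h r ∧ h r < 1)
    (hhlim : Tendsto h atTop (nhds (3 / 5)))
    (hx : ∀ r > 0, HasDerivAt x (-(2 / t r) * x r * (x r - h r)) r)
    (hxpos : ∀ r > 0, 0 < x r ∧ x r < h r)
    (hxmono : StrictMonoOn x (Ioi 0)) :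
    Tendsto x atTop (nhds (3 / 5)) := by
  -- continuity of (t ·)⁻¹ on Ioi 0
  have htinv : ContinuousOn (fun s => (t s)⁻¹) (Ioi 0) :=
    htc.inv₀ fun s hs => (htp s hs).ne'
  -- the shifted function y is monotone and bounded
  set y : ℝ → ℝ := fun r => x (max r 1) with hy
  have hmax : ∀ r : ℝ, (0:ℝ) < max r 1 := fun r => lt_of_lt_of_le one_pos (le_max_right r 1)
  have ymono : Monotone y := by
    intro a b hab
    rcases eq_or_lt_of_le (max_le_max hab (le_refl (1:ℝ))) with heq | hlt
    · simp [hy, heq]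
    · exact (hxmono (hmax a) (hmax b) hlt).le
  have ybdd : BddAbove (Set.range y) := by
    refine ⟨1, ?_⟩
    rintro v ⟨r, rfl⟩
    exact le_of_lt ((hxpos _ (hmax r)).2.trans (hh _ (hmax r)).2)
  set L : ℝ := ⨆ r, y r with hL
  have hylim : Tendsto y atTop (nhds L) := tendsto_atTop_ciSup ymono ybdd
  have hxy : y =ᶠ[atTop] x := by
    filter_upwards [eventually_ge_atTop (1:ℝ)] with r hr
    simp [hy, max_eq_left hr]
  have hxlim : Tendsto x atTop (nhds L) := hylim.congr' hxy
  have hxleL : ∀ r, 1 ≤ r → x r ≤ L := by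
    intro r hr
    have : y r ≤ L := le_ciSup ybdd r
    simpa [hy, max_eq_left hr] using this
  have hLle : L ≤ 3 / 5 := by
    refine le_of_tendsto_of_tendsto hxlim hhlim ?_
    filter_upwards [eventually_gt_atTop (0:ℝ)] with r hr
    exact (hxpos r hr).2.le
  -- show L = 3/5 by contradiction
  have hLeq : L = 3 / 5 := by
    rcases eq_or_lt_of_le hLle with heq | hlt
    · exact heq
    exfalso
    set a : ℝ := x 1 with ha
    have hapos : 0 < a := (hxpos 1 one_pos).1
    set δ : ℝ := (3 / 5 - L) / 2 with hδ
    have hδpos : 0 < δ := by simp only [hδ]; linarith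
    have hLδ : L + δ < 3 / 5 := by simp only [hδ]; linarith
    obtain ⟨R, hR⟩ := (eventually_atTop).1 (hhlim.eventually (eventually_gt_nhds hLδ))
    set R₀ : ℝ := max R 1 with hR₀
    have hR₀pos : (0:ℝ) < R₀ := lt_of_lt_of_le one_pos (le_max_right R 1)
    have hR₀one : (1:ℝ) ≤ R₀ := le_max_right R 1
    have hhgt : ∀ r, R₀ ≤ r → L + δ < h r := fun r hr =>
      hR r ((le_max_left R 1).trans hr)
    set c : ℝ := 2 * a * δ with hc
    have hcpos : 0 < c := by positivity
    set F : ℝ → ℝ := fun r => ∫ s in R₀..r, (t s)⁻¹ with hF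
    -- derivative of F
    have hFderiv : ∀ r, R₀ ≤ r → HasDerivAt F (t r)⁻¹ r := by
      intro r hr
      have hrpos : (0:ℝ) < r := lt_of_lt_of_le hR₀pos hr
      have hsub : Set.uIcc R₀ r ⊆ Ioi 0 := by
        rw [Set.uIcc_of_le hr]
        exact fun s hs => lt_of_lt_of_le hR₀pos hs.1
      have hint : IntervalIntegrable (fun s => (t s)⁻¹) MeasureTheory.volume R₀ r :=
        (htinv.mono hsub).intervalIntegrable
      have hmeas := ContinuousOn.stronglyMeasurableAtFilter
        (μ := MeasureTheory.volume) isOpen_Ioi htinv r hrpos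
      have hcont : ContinuousAt (fun s => (t s)⁻¹) r :=
        htinv.continuousAt (isOpen_Ioi.mem_nhds hrpos)
      exact intervalIntegral.integral_hasDerivAt_right hint hmeas hcont
    -- g is monotone on Ici R₀
    set g : ℝ → ℝ := fun r => x r - c * F r with hg
    have hgderiv : ∀ r, R₀ ≤ r →
        HasDerivAt g (-(2 / t r) * x r * (x r - h r) - c * (t r)⁻¹) r := by
      intro r hr
      exact ((hx r (lt_of_lt_of_le hR₀pos hr)).sub ((hFderiv r hr).const_mul c))
    have hderiv_nonneg : ∀ r, R₀ ≤ r →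
        0 ≤ -(2 / t r) * x r * (x r - h r) - c * (t r)⁻¹ := by
      intro r hr
      have hrpos : (0:ℝ) < r := lt_of_lt_of_le hR₀pos hr
      have htr : 0 < t r := htp r hrpos
      have hxa : a ≤ x r := by
        rcases eq_or_lt_of_le (hR₀one.trans hr) with heq | h1r
        · simp [ha, ← heq]
        · exact (hxmono (mem_Ioi.2 one_pos) (mem_Ioi.2 (lt_trans one_pos h1r)) h1r).le
      have hxL : x r ≤ L := hxleL r (hR₀one.trans hr)
      have hhx : δ ≤ h r - x r := by
        have := hhgt r hr; linarith
      have hkey : c ≤ 2 * x r * (h r - x r) := by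
        have h1 : a * δ ≤ x r * (h r - x r) :=
          mul_le_mul hxa hhx hδpos.le (lt_of_lt_of_le hapos hxa).le
        simp only [hc]; nlinarith
      have h2 : c * (t r)⁻¹ ≤ (2 * x r * (h r - x r)) * (t r)⁻¹ :=
        mul_le_mul_of_nonneg_right hkey (inv_nonneg.2 htr.le)
      have heq : -(2 / t r) * x r * (x r - h r) = (2 * x r * (h r - x r)) * (t r)⁻¹ := by
        field_simp; ring
      rw [heq]
      linarith
    have hgmono : MonotoneOn g (Ici R₀) := by
      apply monotoneOn_of_hasDerivWithinAt_nonneg (convex_Ici R₀)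
        (f' := fun r => -(2 / t r) * x r * (x r - h r) - c * (t r)⁻¹)
      · intro r hr
        exact (hgderiv r hr).continuousAt.continuousWithinAt
      · intro r hr
        rw [interior_Ici] at hr
        exact (hgderiv r (le_of_lt hr)).hasDerivWithinAt
      · intro r hr
        rw [interior_Ici] at hr
        exact hderiv_nonneg r (le_of_lt hr)
    -- F tends to infinity, contradiction
    have hFtop : Tendsto F atTop atTop := hhint R₀ hR₀pos
    obtain ⟨r, hr1, hr2⟩ := ((hFtop.eventually_ge_atTop (2 / c)).and
      (eventually_ge_atTop R₀)).exists
    have hgle : g R₀ ≤ g r := hgmono self_mem_Ici hr2 hr2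
    have hF0 : F R₀ = 0 := intervalIntegral.integral_same
    have hcF : 2 ≤ c * F r := by
      have := mul_le_mul_of_nonneg_left hr1 hcpos.le
      rwa [mul_div_cancel₀ _ hcpos.ne'] at this
    have hxr1 : x r < 1 := (hxpos r (lt_of_lt_of_le hR₀pos hr2)).2.trans
      (hh r (lt_of_lt_of_le hR₀pos hr2)).2
    have hxR₀ : 0 < x R₀ := (hxpos R₀ hR₀pos).1
    simp only [hg, hF0, mul_zero, sub_zero] at hgle
    linarith
  rw [hLeq] at hxlim
  exact hxlim
end

section
/- Define x_lim(r) = t(r)²/(2∫₀ʳ t(s)ds), where t solves the Spin(7) evolution system with t(0) = 0, ν(0) = ν₀ > 0. Then x_lim solves the instanton ODE dx/dr = -(2/t)x(x - (1 - 2t²/ν²)) on (0,∞). -/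
/-!
Write `T(r) = ∫₀ʳ t`, so `x_lim = t² / (2T)` and `T' = t` by the fundamental theorem of calculus.
The quotient rule gives `x_lim' = t t' / T - t³ / (2T²)`, which is exactly
`-(2/t) x_lim (x_lim - t')` with `t' = 1 - 2t²/ν²` (at `t = 0` both sides vanish, using
`2/0 = 0`). Positivity of `t` makes `T > 0` for `r > 0`.
-/

open Set

theorem ContinuousOn.hasDerivAt_integral_of_Ici {E : Type*} [NormedAddCommGroup E]
    [NormedSpace ℝ E] [CompleteSpace E] {f : ℝ → E} {a r : ℝ} (hf : ContinuousOn f (Ici a))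
    (har : a < r) : HasDerivAt (fun s => ∫ u in a..s, f u) (f r) r :=
  intervalIntegral.integral_hasDerivAt_right
    ((hf.mono Icc_subset_Ici_self).intervalIntegrable_of_Icc har.le)
    ((hf.mono Ioi_subset_Ici_self).stronglyMeasurableAtFilter isOpen_Ioi r har)
    (hf.continuousAt (Ici_mem_nhds har))

theorem ContinuousOn.integral_pos_of_Ici {f : ℝ → ℝ} {a r : ℝ} (hf : ContinuousOn f (Ici a))
    (hpos : ∀ s > a, 0 < f s) (har : a < r) : 0 < ∫ u in a..r, f u :=
  intervalIntegral.intervalIntegral_pos_of_pos_on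
    ((hf.mono Icc_subset_Ici_self).intervalIntegrable_of_Icc har.le)
    (fun s hs => hpos s hs.1) har

theorem HasDerivAt.sq_div_two_mul_primitive {t T : ℝ → ℝ} {t' r : ℝ} (ht : HasDerivAt t t' r)
    (hT : HasDerivAt T (t r) r) (hTr : T r ≠ 0) :
    HasDerivAt (fun s => t s ^ 2 / (2 * T s))
      (-(2 / t r) * (t r ^ 2 / (2 * T r)) * (t r ^ 2 / (2 * T r) - t')) r := by
  have hquot := (ht.fun_pow 2).fun_div (hT.const_mul 2) (mul_ne_zero two_ne_zero hTr)
  refine hquot.congr_deriv ?_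
  field_simp [hTr]
  ring

theorem spin7_xlim_solves_instanton_ODE_general (t ν : ℝ → ℝ)
    (htc : ContinuousOn t (Ici 0))
    (hpos : ∀ r > 0, 0 < t r ∧ 0 < ν r)
    (h2 : ∀ r > 0, HasDerivAt t (1 - 2 * t r ^ 2 / ν r ^ 2) r) :
    ∀ r > 0,
      HasDerivAt (fun s => t s ^ 2 / (2 * ∫ u in (0 : ℝ)..s, t u))
        (-(2 / t r) * (t r ^ 2 / (2 * ∫ u in (0 : ℝ)..r, t u)) *
          (t r ^ 2 / (2 * ∫ u in (0 : ℝ)..r, t u) - (1 - 2 * t r ^ 2 / ν r ^ 2))) r := by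
  intro r hr
  have hT_pos : 0 < ∫ u in (0 : ℝ)..r, t u :=
    htc.integral_pos_of_Ici (fun s hs => (hpos s hs).1) hr
  exact (h2 r hr).sq_div_two_mul_primitive (htc.hasDerivAt_integral_of_Ici hr) hT_pos.ne'

theorem spin7_xlim_solves_instanton_ODE (t ν : ℝ → ℝ) (ν₀ : ℝ) (hν₀ : 0 < ν₀)
    (ht0 : t 0 = 0) (hν0 : ν 0 = ν₀)
    (htc : ContinuousOn t (Ici 0)) (hνc : ContinuousOn ν (Ici 0))
    (hpos : ∀ r > 0, 0 < t r ∧ 0 < ν r)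
    (h1 : ∀ r > 0, HasDerivAt (fun s => ν s ^ 2) (6 * t r) r)
    (h2 : ∀ r > 0, HasDerivAt t (1 - 2 * t r ^ 2 / ν r ^ 2) r) :
    ∀ r > 0,
      HasDerivAt (fun s => t s ^ 2 / (2 * ∫ u in (0 : ℝ)..s, t u))
        (-(2 / t r) * (t r ^ 2 / (2 * ∫ u in (0 : ℝ)..r, t u)) *
          (t r ^ 2 / (2 * ∫ u in (0 : ℝ)..r, t u) - (1 - 2 * t r ^ 2 / ν r ^ 2))) r :=
  spin7_xlim_solves_instanton_ODE_general t ν htc hpos h2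
end

section
/- For ν > ν₀ > 0 and y₀ > 0, the function (3/5)·ν^{-4/3}·(ν^{10/3} - ν₀^{10/3})/(ν² - ν₀² + 3/y₀) equals 3/5 + (3/5)(ν₀²y₀ - 3)/(y₀ν²) + O(ν^{-10/3}) as ν → ∞; in particular, when y₀ = 3/ν₀² the expression equals (3/5)(1 - (ν₀/ν)^{10/3}) exactly. -/
/-!
With `a = ν₀ ^ (10/3)` and `b = ν₀ ^ 2 - 3 / y₀`, the error term is exactly
`(3/5) (b ^ 2 - a ν ^ (2/3)) / (ν ^ 2 (ν ^ 2 - b))`. Once `ν ^ 2 ≥ 2 |b|` the denominator is at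
least `ν ^ 4 / 2`, and `1 ≤ ν ^ (2/3)` bounds the numerator by `(b ^ 2 + a) ν ^ (2/3)`, which gives
`O(ν ^ (-10/3))`. When `y₀ = 3 / ν₀ ^ 2` we have `b = 0`, and the quotient simplifies exactly.
-/

open Real

/-- The coefficient `x_{y₀}(ν)` of the instanton. -/
noncomputable def instantonCoeff (ν₀ y₀ ν : ℝ) : ℝ :=
  3 / 5 * ν ^ (-(4 : ℝ) / 3) * (ν ^ ((10 : ℝ) / 3) - ν₀ ^ ((10 : ℝ) / 3)) /
    (ν ^ 2 - ν₀ ^ 2 + 3 / y₀)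

lemma mul_sub_div_sub_one_sub_div {x r P a b : ℝ} (hx : x ≠ 0) (hxb : x ^ 2 - b ≠ 0)
    (hrP : r * P = x ^ 2) :
    r * (P - a) / (x ^ 2 - b) - 1 - b / x ^ 2 =
      (b ^ 2 - a * r * x ^ 2) / (x ^ 2 * (x ^ 2 - b)) := by
  rw [mul_sub, hrP]
  field_simp
  ring

lemma abs_sub_div_le {x r a b : ℝ} (hx : 0 < x) (hb : 2 * |b| ≤ x ^ 2) (ha : 0 ≤ a)
    (hr : 1 ≤ r * x ^ 2) :
    |(b ^ 2 - a * r * x ^ 2) / (x ^ 2 * (x ^ 2 - b))| ≤ 2 * (b ^ 2 + a) * (r / x ^ 2) := by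
  have hden : x ^ 4 / 2 ≤ x ^ 2 * (x ^ 2 - b) := by nlinarith [le_abs_self b]
  have hnum : |b ^ 2 - a * r * x ^ 2| ≤ (b ^ 2 + a) * (r * x ^ 2) := by
    have har : 0 ≤ a * (r * x ^ 2) := mul_nonneg ha (by linarith)
    rw [abs_le]; constructor <;> nlinarith [sq_nonneg b]
  have hpos : 0 < x ^ 2 * (x ^ 2 - b) := by nlinarith [pow_pos hx 4]
  rw [abs_div, abs_of_pos hpos, div_le_iff₀ hpos]
  calc |b ^ 2 - a * r * x ^ 2| ≤ (b ^ 2 + a) * (r * x ^ 2) := hnum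
    _ = 2 * (b ^ 2 + a) * (r / x ^ 2) * (x ^ 4 / 2) := by field_simp
    _ ≤ 2 * (b ^ 2 + a) * (r / x ^ 2) * (x ^ 2 * (x ^ 2 - b)) := by
        gcongr
        have : 0 ≤ r := by nlinarith
        positivity

section RpowThirds

variable {x : ℝ}

lemma rpow_neg_four_thirds_mul_rpow_ten_thirds (hx : 0 < x) :
    x ^ (-(4 : ℝ) / 3) * x ^ ((10 : ℝ) / 3) = x ^ 2 := by
  rw [← rpow_add hx]; norm_num

lemma rpow_neg_ten_thirds_eq_div (hx : 0 < x) :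
    x ^ (-(10 : ℝ) / 3) = x ^ (-(4 : ℝ) / 3) / x ^ 2 := by
  rw [← rpow_two, ← rpow_sub hx]; norm_num

lemma one_le_rpow_neg_four_thirds_mul_sq (hx : 1 ≤ x) : 1 ≤ x ^ (-(4 : ℝ) / 3) * x ^ 2 := by
  rw [← rpow_two, ← rpow_add (by linarith)]
  exact one_le_rpow hx (by norm_num)

end RpowThirds

lemma instantonCoeff_sub_eq {ν₀ y₀ ν : ℝ} (hy₀ : y₀ ≠ 0) :
    instantonCoeff ν₀ y₀ ν - 3 / 5 - 3 / 5 * (ν₀ ^ 2 * y₀ - 3) / (y₀ * ν ^ 2) =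
      3 / 5 * (ν ^ (-(4 : ℝ) / 3) * (ν ^ ((10 : ℝ) / 3) - ν₀ ^ ((10 : ℝ) / 3)) /
        (ν ^ 2 - (ν₀ ^ 2 - 3 / y₀)) - 1 - (ν₀ ^ 2 - 3 / y₀) / ν ^ 2) := by
  have hden : ν ^ 2 - ν₀ ^ 2 + 3 / y₀ = ν ^ 2 - (ν₀ ^ 2 - 3 / y₀) := by ring
  unfold instantonCoeff
  rw [hden]
  field_simp

lemma abs_instantonCoeff_sub_le {ν₀ y₀ ν : ℝ} (hν₀ : 0 < ν₀) (hy₀ : y₀ ≠ 0)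
    (hν : max 1 (2 * |ν₀ ^ 2 - 3 / y₀|) ≤ ν) :
    |instantonCoeff ν₀ y₀ ν - 3 / 5 - 3 / 5 * (ν₀ ^ 2 * y₀ - 3) / (y₀ * ν ^ 2)| ≤
      6 / 5 * ((ν₀ ^ 2 - 3 / y₀) ^ 2 + ν₀ ^ ((10 : ℝ) / 3)) * ν ^ (-(10 : ℝ) / 3) := by
  set b := ν₀ ^ 2 - 3 / y₀
  obtain ⟨hν1, hνb⟩ := max_le_iff.mp hν
  have hν0 : 0 < ν := by linarith
  have hb : 2 * |b| ≤ ν ^ 2 := by nlinarith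
  have hνb0 : ν ^ 2 - b ≠ 0 := by nlinarith [le_abs_self b]
  rw [instantonCoeff_sub_eq hy₀,
    mul_sub_div_sub_one_sub_div hν0.ne' hνb0 (rpow_neg_four_thirds_mul_rpow_ten_thirds hν0),
    abs_mul, abs_of_pos (by norm_num : (0 : ℝ) < 3 / 5), rpow_neg_ten_thirds_eq_div hν0]
  have := abs_sub_div_le hν0 hb (rpow_pos_of_pos hν₀ ((10 : ℝ) / 3)).le
    (one_le_rpow_neg_four_thirds_mul_sq hν1)
  linarith

lemma instantonCoeff_of_y₀_eq {ν₀ ν : ℝ} (hν₀ : 0 < ν₀) (hν : 0 < ν) :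
    instantonCoeff ν₀ (3 / ν₀ ^ 2) ν = 3 / 5 * (1 - (ν₀ / ν) ^ ((10 : ℝ) / 3)) := by
  have hden : ν ^ 2 - ν₀ ^ 2 + 3 / (3 / ν₀ ^ 2) = ν ^ 2 := by field_simp; ring
  unfold instantonCoeff
  rw [hden, div_rpow hν₀.le hν.le, ← rpow_neg_four_thirds_mul_rpow_ten_thirds hν]
  field_simp

theorem spin7_instanton_asymptotics (ν₀ y₀ : ℝ) (hν₀ : 0 < ν₀) (hy₀ : 0 < y₀) :
    (∃ C > (0 : ℝ), ∃ M : ℝ, ∀ x ≥ M,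
      |3 / 5 * x ^ (-(4 : ℝ) / 3) * (x ^ ((10 : ℝ) / 3) - ν₀ ^ ((10 : ℝ) / 3)) /
          (x ^ 2 - ν₀ ^ 2 + 3 / y₀) -
        3 / 5 - 3 / 5 * (ν₀ ^ 2 * y₀ - 3) / (y₀ * x ^ 2)| ≤ C * x ^ (-(10 : ℝ) / 3)) ∧
    (y₀ = 3 / ν₀ ^ 2 → ∀ x > ν₀,
      3 / 5 * x ^ (-(4 : ℝ) / 3) * (x ^ ((10 : ℝ) / 3) - ν₀ ^ ((10 : ℝ) / 3)) /
          (x ^ 2 - ν₀ ^ 2 + 3 / y₀) =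
        3 / 5 * (1 - (ν₀ / x) ^ ((10 : ℝ) / 3))) := by
  have hC : 0 < 6 / 5 * ((ν₀ ^ 2 - 3 / y₀) ^ 2 + ν₀ ^ ((10 : ℝ) / 3)) := by positivity
  refine ⟨⟨_, hC, max 1 (2 * |ν₀ ^ 2 - 3 / y₀|), fun x hx ↦
    abs_instantonCoeff_sub_le hν₀ hy₀.ne' hx⟩, ?_⟩
  rintro rfl x hx
  exact instantonCoeff_of_y₀_eq hν₀ (hν₀.trans hx)
end

section
/- Let t(r) = r + O(r³) near 0 (precisely, |t(r) - r| ≤ Cr³ for r ≤ 1), and for y₀, κ > 0 set λ = √(κ/y₀). Then for r ∈ (0,1], the rescaled coefficient x_{y₀}(λr) = y₀t(λr)²/(1 + 2y₀∫₀^{λr} t) satisfies |x_{y₀}(λr) - κr²/(1+κr²)| ≤ C'κ²/y₀ for some constant C' independent of κ, y₀ (for y₀ large). In particular x_{y₀}(λ·) converges uniformly on (0,1] to the basic ASD instanton profile κr²/(1+κr²) as y₀ → ∞. -/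
open Set

/-!
Put `a = λ r`, so that `y₀ a² = κ r²` and `y₀ a⁴ = (κ r²)² / y₀ ≤ κ² / y₀`. Since `t(a) = a + O(a³)`,
both the numerator `y₀ t(a)²` and the shifted denominator `2 y₀ ∫₀^a t` are `y₀ a² + O(y₀ a⁴)`, and
`X / D` is `1`-Lipschitz in `(X, D)` around `(K, 1 + K)` as long as `D ≥ 1`.
-/

lemma abs_div_sub_div_one_add_le {X K D : ℝ} (hD : 1 ≤ D) (hK : 0 ≤ K) :
    |X / D - K / (1 + K)| ≤ |X - K| + |D - 1 - K| := by
  have hD0 : 0 < D := one_pos.trans_le hD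
  have hK1 : 0 < 1 + K := by linarith
  rw [div_sub_div _ _ hD0.ne' hK1.ne', abs_div, abs_of_pos (mul_pos hD0 hK1),
    div_le_iff₀ (mul_pos hD0 hK1)]
  calc |X * (1 + K) - D * K| = |(X - K) * (1 + K) - K * (D - 1 - K)| := by ring_nf
    _ ≤ |X - K| * (1 + K) + K * |D - 1 - K| := by
      refine (abs_sub _ _).trans_eq ?_
      rw [abs_mul, abs_mul, abs_of_pos hK1, abs_of_nonneg hK]
    _ ≤ (|X - K| + |D - 1 - K|) * (D * (1 + K)) := by
      nlinarith [mul_nonneg (mul_nonneg (abs_nonneg (X - K)) (sub_nonneg.2 hD)) hK1.le,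
        mul_nonneg (abs_nonneg (D - 1 - K)) (mul_nonneg (sub_nonneg.2 hD) hK),
        mul_nonneg (abs_nonneg (D - 1 - K)) hD0.le]

lemma abs_sq_sub_sq_le {u a ε : ℝ} (h : |u - a| ≤ ε) : |u ^ 2 - a ^ 2| ≤ ε * (ε + 2 * |a|) := by
  have hsum : |u + a| ≤ ε + 2 * |a| := calc
    |u + a| = |(u - a) + 2 * a| := by ring_nf
    _ ≤ |u - a| + 2 * |a| := (abs_add_le _ _).trans_eq (by rw [abs_mul, abs_two])
    _ ≤ ε + 2 * |a| := by linarith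
  rw [sq_sub_sq, abs_mul, mul_comm]
  exact mul_le_mul h hsum (abs_nonneg _) ((abs_nonneg _).trans h)

section CubicApproximation

variable {t : ℝ → ℝ} {C a : ℝ}

lemma abs_sq_sub_sq_le_of_abs_sub_le_cube (ha0 : 0 ≤ a) (ha1 : a ≤ 1)
    (happ : |t a - a| ≤ C * a ^ 3) : |t a ^ 2 - a ^ 2| ≤ C * (C + 2) * a ^ 4 := by
  have ha6 : a ^ 6 ≤ a ^ 4 := pow_le_pow_of_le_one ha0 ha1 (by norm_num)
  calc |t a ^ 2 - a ^ 2| ≤ C * a ^ 3 * (C * a ^ 3 + 2 * |a|) := abs_sq_sub_sq_le happ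
    _ = C ^ 2 * a ^ 6 + 2 * C * a ^ 4 := by rw [abs_of_nonneg ha0]; ring
    _ ≤ C * (C + 2) * a ^ 4 := by nlinarith [mul_le_mul_of_nonneg_left ha6 (sq_nonneg C)]

lemma abs_integral_sub_half_sq_le (ha0 : 0 ≤ a) (hC : 0 ≤ C)
    (hti : IntervalIntegrable t MeasureTheory.volume 0 a)
    (happ : ∀ s ∈ Ioc 0 a, |t s - s| ≤ C * s ^ 3) :
    |(∫ s in (0 : ℝ)..a, t s) - a ^ 2 / 2| ≤ C * a ^ 4 / 4 := by
  have hsub : (∫ s in (0 : ℝ)..a, t s) - a ^ 2 / 2 = ∫ s in (0 : ℝ)..a, (t s - s) := by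
    rw [intervalIntegral.integral_sub hti (continuous_id'.intervalIntegrable 0 a), integral_id]
    ring
  have hcube : (∫ s in (0 : ℝ)..a, C * s ^ 3) = C * a ^ 4 / 4 := by
    rw [intervalIntegral.integral_const_mul, integral_pow]
    ring
  rw [hsub]
  calc |∫ s in (0 : ℝ)..a, (t s - s)| ≤ |∫ s in (0 : ℝ)..a, C * s ^ 3| := by
        rw [← Real.norm_eq_abs (∫ s in (0 : ℝ)..a, (t s - s))]
        refine intervalIntegral.norm_integral_le_abs_of_norm_le ?_
          ((continuous_const.mul (continuous_pow 3)).intervalIntegrable 0 a)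
        filter_upwards [MeasureTheory.ae_restrict_mem measurableSet_uIoc] with s hs
        exact happ s (uIoc_of_le ha0 ▸ hs)
    _ = C * a ^ 4 / 4 := by rw [hcube, abs_of_nonneg (by positivity)]

lemma abs_coeff_sub_asd_profile_le {y : ℝ} (hy : 0 ≤ y) (ha0 : 0 < a) (ha1 : a ≤ 1) (hC : 0 ≤ C)
    (htc : ContinuousOn t (Icc 0 a)) (htn : ∀ s ∈ Icc 0 a, 0 ≤ t s)
    (happ : ∀ s ∈ Ioc 0 a, |t s - s| ≤ C * s ^ 3) :
    |y * t a ^ 2 / (1 + 2 * y * ∫ s in (0 : ℝ)..a, t s) - y * a ^ 2 / (1 + y * a ^ 2)|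
      ≤ (C + 2) ^ 2 * (y * a ^ 4) := by
  set I := ∫ s in (0 : ℝ)..a, t s
  have hti : IntervalIntegrable t MeasureTheory.volume 0 a :=
    htc.intervalIntegrable_of_Icc ha0.le
  have hI0 : 0 ≤ I := intervalIntegral.integral_nonneg ha0.le htn
  have hnum : |y * t a ^ 2 - y * a ^ 2| ≤ C * (C + 2) * (y * a ^ 4) := by
    rw [← mul_sub, abs_mul, abs_of_nonneg hy]
    have := abs_sq_sub_sq_le_of_abs_sub_le_cube ha0.le ha1 (happ a ⟨ha0, le_rfl⟩)
    nlinarith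
  have hden : |1 + 2 * y * I - 1 - y * a ^ 2| ≤ C / 2 * (y * a ^ 4) := by
    rw [show 1 + 2 * y * I - 1 - y * a ^ 2 = 2 * y * (I - a ^ 2 / 2) by ring, abs_mul,
      abs_of_nonneg (by positivity)]
    have := abs_integral_sub_half_sq_le ha0.le hC hti happ
    nlinarith
  calc _ ≤ |y * t a ^ 2 - y * a ^ 2| + |1 + 2 * y * I - 1 - y * a ^ 2| :=
        abs_div_sub_div_one_add_le (by nlinarith) (by positivity)
    _ ≤ (C + 2) ^ 2 * (y * a ^ 4) := by nlinarith [mul_nonneg hy (pow_nonneg ha0.le 4)]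

end CubicApproximation

theorem spin7_bubbling_asd (t : ℝ → ℝ) (C : ℝ)
    (htc : ContinuousOn t (Ici 0)) (htn : ∀ r ≥ 0, 0 ≤ t r)
    (happ : ∀ r ∈ Ioc (0 : ℝ) 1, |t r - r| ≤ C * r ^ 3) :
    ∃ C' > (0 : ℝ), ∀ κ > (0 : ℝ), ∀ y₀ ≥ max κ 1, ∀ r ∈ Ioc (0 : ℝ) 1,
      |y₀ * t (Real.sqrt (κ / y₀) * r) ^ 2 /
          (1 + 2 * y₀ * ∫ s in (0 : ℝ)..(Real.sqrt (κ / y₀) * r), t s) -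
        κ * r ^ 2 / (1 + κ * r ^ 2)| ≤ C' * κ ^ 2 / y₀ := by
  have hC : 0 ≤ C := by simpa using (abs_nonneg _).trans (happ 1 ⟨one_pos, le_rfl⟩)
  refine ⟨(C + 2) ^ 2, by positivity, fun κ hκ y₀ hy₀ r ⟨hr0, hr1⟩ => ?_⟩
  have hy₀1 : 1 ≤ y₀ := (le_max_right _ _).trans hy₀
  have hy₀0 : 0 < y₀ := one_pos.trans_le hy₀1
  set a := Real.sqrt (κ / y₀) * r
  have hsqrt0 : 0 < Real.sqrt (κ / y₀) := Real.sqrt_pos.2 (by positivity)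
  have hsqrt1 : Real.sqrt (κ / y₀) ≤ 1 :=
    Real.sqrt_le_one.2 ((div_le_one hy₀0).2 ((le_max_left _ _).trans hy₀))
  have ha0 : 0 < a := mul_pos hsqrt0 hr0
  have ha1 : a ≤ 1 := mul_le_one₀ hsqrt1 hr0.le hr1
  have hscale : y₀ * a ^ 2 = κ * r ^ 2 := by
    rw [mul_pow, Real.sq_sqrt (by positivity)]; field_simp
  have hquartic : y₀ * a ^ 4 ≤ κ ^ 2 / y₀ := by
    rw [le_div_iff₀ hy₀0, show y₀ * a ^ 4 * y₀ = (y₀ * a ^ 2) ^ 2 by ring, hscale]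
    nlinarith [pow_le_one₀ hr0.le hr1 (n := 4), sq_nonneg κ]
  have key := abs_coeff_sub_asd_profile_le hy₀0.le ha0 ha1 hC (htc.mono Icc_subset_Ici_self)
    (fun s hs => htn s hs.1) (fun s hs => happ s ⟨hs.1, hs.2.trans ha1⟩)
  rw [hscale] at key
  exact (key.trans (mul_le_mul_of_nonneg_left hquartic (by positivity))).trans_eq
    (mul_div_assoc _ _ _).symm
end
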